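/- arXiv:0809.3921 — 6 statements merged into one kernel-verified Lean document; each statement's English description precedes it below -/
import Mathlib

section
/- For every ξ, η ∈ ℝ^{2×2} it holds that W(ξ+η) − W(ξ) − W′(ξ)(η) ≥ ((det ξ − y)/W(ξ))·det η, where W′(ξ) denotes the Fréchet derivative of W at ξ. -/
open Matrix Filter Topology

attribute [local instance] Matrix.frobeniusSeminormedAddCommGroup
  Matrix.frobeniusNormedAddCommGroup Matrix.frobeniusNormedSpace

abbrev M2 := Matrix (Fin 2) (Fin 2) ℝ

noncomputable section

def E11 : M2 := Matrix.single 0 0 1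

def E22 : M2 := Matrix.single 1 1 1

/-- `[ξ]`: the matrix `ξ` with its `(1,1)` entry replaced by `0`. -/
def br (ξ : M2) : M2 := ξ - ξ 0 0 • E11

/-- `W(ξ) = √(‖[ξ]‖² + (det ξ − y)²)` with the Frobenius norm. -/
def Wf (y : ℝ) (ξ : M2) : ℝ := Real.sqrt (‖br ξ‖ ^ 2 + (ξ.det - y) ^ 2)

end

/-!
`W(ξ) = ‖F ξ‖` for `F ξ = wVec y ξ = (ξ₁₂, ξ₂₁, ξ₂₂, det ξ − y) ∈ ℝ⁴`. Since `det` is quadratic,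
`F (ξ + η) = F ξ + F′(ξ) η + det η • e₄` exactly. The norm lies above its tangent planes,
`‖b‖ − ‖a‖ ≥ ⟪a, b − a⟫ / ‖a‖` (Cauchy–Schwarz), and `W′(ξ) η = ⟪F ξ, F′(ξ) η⟫ / ‖F ξ‖`, so
the second-order error of `W` is at least `⟪F ξ, det η • e₄⟫ / ‖F ξ‖ = (det ξ − y) det η / W(ξ)`.
-/

open scoped RealInnerProductSpace

section NormComp

variable {V E : Type*} [NormedAddCommGroup V] [NormedSpace ℝ V]
  [NormedAddCommGroup E] [InnerProductSpace ℝ E]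

theorem inner_sub_div_norm_le_norm_sub_norm {a : E} (ha : a ≠ 0) (b : E) :
    ⟪a, b - a⟫ / ‖a‖ ≤ ‖b‖ - ‖a‖ := by
  have hpos : 0 < ‖a‖ := norm_pos_iff.mpr ha
  rw [div_le_iff₀ hpos, inner_sub_right, real_inner_self_eq_norm_mul_norm]
  nlinarith [real_inner_le_norm a b]

theorem HasFDerivAt.norm {f : V → E} {f' : V →L[ℝ] E} {x : V} (hf : HasFDerivAt f f' x)
    (h0 : f x ≠ 0) : HasFDerivAt (‖f ·‖) (‖f x‖⁻¹ • (innerSL ℝ (f x)).comp f') x := by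
  have hsqrt : (‖f ·‖) = fun v => √(‖f v‖ ^ 2) :=
    funext fun v => (Real.sqrt_sq (norm_nonneg _)).symm
  rw [hsqrt]
  convert hf.norm_sq.sqrt (by positivity) using 1
  ext h
  simp only [_root_.smul_apply, ContinuousLinearMap.comp_apply, coe_innerSL_apply, smul_eq_mul,
    Real.sqrt_sq (norm_nonneg _), nsmul_eq_mul, Nat.cast_ofNat]
  field_simp

theorem HasFDerivAt.inner_remainder_div_norm_le {f : V → E} {f' : V →L[ℝ] E} {x : V}
    (hf : HasFDerivAt f f' x) (h0 : f x ≠ 0) (h : V) :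
    ⟪f x, f (x + h) - f x - f' h⟫ / ‖f x‖ ≤ ‖f (x + h)‖ - ‖f x‖ - fderiv ℝ (‖f ·‖) x h := by
  rw [(hf.norm h0).fderiv, inner_sub_right, sub_div]
  have := inner_sub_div_norm_le_norm_sub_norm h0 (f (x + h))
  simp only [_root_.smul_apply, ContinuousLinearMap.comp_apply, innerSL_apply_apply, smul_eq_mul,
    inv_mul_eq_div]
  linarith

end NormComp

namespace Matrix

noncomputable def detFDeriv (ξ : M2) : M2 →L[ℝ] ℝ :=
  LinearMap.toContinuousLinearMap
    { toFun := fun η => ξ 0 0 * η 1 1 + ξ 1 1 * η 0 0 - ξ 0 1 * η 1 0 - ξ 1 0 * η 0 1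
      map_add' := fun η ζ => by simp only [add_apply]; ring
      map_smul' := fun c η => by simp only [smul_apply, smul_eq_mul, RingHom.id_apply]; ring }

theorem detFDeriv_apply (ξ η : M2) :
    detFDeriv ξ η = ξ 0 0 * η 1 1 + ξ 1 1 * η 0 0 - ξ 0 1 * η 1 0 - ξ 1 0 * η 0 1 :=
  rfl

theorem hasFDerivAt_det_fin_two (ξ : M2) : HasFDerivAt det (detFDeriv ξ) ξ := by
  have hentry (i j : Fin 2) :
      HasFDerivAt (fun m : M2 => m i j) (entryLinearMap ℝ ℝ i j).toContinuousLinearMap ξ :=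
    (entryLinearMap ℝ ℝ i j).toContinuousLinearMap.hasFDerivAt
  rw [show (det : M2 → ℝ) = fun m => m 0 0 * m 1 1 - m 0 1 * m 1 0 from funext det_fin_two]
  refine (((hentry 0 0).mul (hentry 1 1)).sub ((hentry 0 1).mul (hentry 1 0))).congr_fderiv ?_
  ext η
  change ξ 0 0 * η 1 1 + ξ 1 1 * η 0 0 - (ξ 0 1 * η 1 0 + ξ 1 0 * η 0 1) = detFDeriv ξ η
  rw [detFDeriv_apply]
  ring

theorem det_add_fin_two (ξ η : M2) : (ξ + η).det = ξ.det + detFDeriv ξ η + η.det := by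
  simp only [det_fin_two, detFDeriv_apply, add_apply]
  ring

end Matrix

open Matrix

noncomputable section

def bracketVec : M2 →L[ℝ] EuclideanSpace ℝ (Fin 4) :=
  LinearMap.toContinuousLinearMap
    { toFun := fun ξ => !₂[ξ 0 1, ξ 1 0, ξ 1 1, 0]
      map_add' := fun ξ η => by ext i; fin_cases i <;> simp
      map_smul' := fun c ξ => by ext i; fin_cases i <;> simp }

def wVec (y : ℝ) (ξ : M2) : EuclideanSpace ℝ (Fin 4) :=
  bracketVec ξ + (ξ.det - y) • EuclideanSpace.single 3 1

def wVecFDeriv (ξ : M2) : M2 →L[ℝ] EuclideanSpace ℝ (Fin 4) :=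
  bracketVec + (detFDeriv ξ).smulRight (EuclideanSpace.single 3 1)

end

theorem norm_br_sq (ξ : M2) : ‖br ξ‖ ^ 2 = ξ 0 1 ^ 2 + ξ 1 0 ^ 2 + ξ 1 1 ^ 2 := by
  rw [frobenius_norm_def, ← Real.rpow_natCast, ← Real.rpow_mul (by positivity)]
  norm_num [Fin.sum_univ_two, br, E11]
  ring

theorem Wf_eq_norm_wVec (y : ℝ) (ξ : M2) : Wf y ξ = ‖wVec y ξ‖ := by
  rw [Wf, norm_br_sq, EuclideanSpace.norm_eq]
  simp [wVec, bracketVec, Fin.sum_univ_four]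

theorem wVec_ne_zero {y : ℝ} (hy : 0 < y) (ξ : M2) : wVec y ξ ≠ 0 := by
  intro h
  have h10 : ξ 1 0 = 0 := by simpa [wVec, bracketVec] using congrArg (· 1) h
  have h11 : ξ 1 1 = 0 := by simpa [wVec, bracketVec] using congrArg (· 2) h
  have hdet : ξ.det - y = 0 := by simpa [wVec, bracketVec] using congrArg (· 3) h
  rw [det_fin_two, h10, h11] at hdet
  linarith

theorem hasFDerivAt_wVec (y : ℝ) (ξ : M2) : HasFDerivAt (wVec y) (wVecFDeriv ξ) ξ :=
  bracketVec.hasFDerivAt.add (((hasFDerivAt_det_fin_two ξ).sub_const y).smul_const _)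

theorem wVec_add_sub_sub (y : ℝ) (ξ η : M2) :
    wVec y (ξ + η) - wVec y ξ - wVecFDeriv ξ η = η.det • EuclideanSpace.single 3 1 := by
  simp only [wVec, wVecFDeriv, map_add, det_add_fin_two, _root_.add_apply,
    ContinuousLinearMap.smulRight_apply, add_smul, sub_smul]
  abel

theorem inner_wVec_single (y : ℝ) (ξ : M2) :
    ⟪wVec y ξ, EuclideanSpace.single 3 1⟫ = ξ.det - y := by
  simp [EuclideanSpace.inner_single_right, wVec, bracketVec]

/-- For every ξ, η ∈ ℝ^{2×2}:
W(ξ+η) − W(ξ) − W′(ξ)(η) ≥ ((det ξ − y)/W(ξ)) · det η. -/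
theorem stmt_0 (y : ℝ) (hy : 0 < y) (ξ η : M2) :
    Wf y (ξ + η) - Wf y ξ - fderiv ℝ (Wf y) ξ η ≥ ((ξ.det - y) / Wf y ξ) * η.det := by
  have hW : Wf y = (‖wVec y ·‖) := funext (Wf_eq_norm_wVec y)
  rw [hW, ge_iff_le]
  calc (ξ.det - y) / ‖wVec y ξ‖ * η.det
      = ⟪wVec y ξ, wVec y (ξ + η) - wVec y ξ - wVecFDeriv ξ η⟫ / ‖wVec y ξ‖ := by
        rw [wVec_add_sub_sub, inner_smul_right, inner_wVec_single]
        ring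
    _ ≤ _ := (hasFDerivAt_wVec y ξ).inner_remainder_div_norm_le (wVec_ne_zero hy ξ) η
end

section
/- W is Fréchet differentiable at every ξ ∈ ℝ^{2×2}. -/
open Matrix Filter Topology

attribute [local instance] Matrix.frobeniusSeminormedAddCommGroup
  Matrix.frobeniusNormedAddCommGroup Matrix.frobeniusNormedSpace

/-! The radicand `‖[ξ]‖² + (det ξ - y)²` is a polynomial in the entries of `ξ`, and it never
vanishes: `[ξ] = 0` forces `ξ` to be a multiple of `e₁ ⊗ e₁`, hence `det ξ = 0` and the radicand
equals `y² > 0`. The square root is differentiable away from `0`. -/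

section FrobeniusCalculus

variable {m n : Type*} [Fintype m] [Fintype n]

theorem frobenius_norm_sq_eq_sum (A : Matrix m n ℝ) : ‖A‖ ^ 2 = ∑ i, ∑ j, A i j ^ 2 := by
  rw [frobenius_norm_def, ← Real.sqrt_eq_rpow, Real.sq_sqrt (by positivity)]
  simp only [Real.rpow_two, Real.norm_eq_abs, sq_abs]

theorem differentiable_entry (i : m) (j : n) : Differentiable ℝ fun A : Matrix m n ℝ => A i j :=
  (entryLinearMap ℝ ℝ i j).toContinuousLinearMap.differentiable

theorem Differentiable.frobenius_norm_sq {E : Type*} [NormedAddCommGroup E] [NormedSpace ℝ E]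
    {f : E → Matrix m n ℝ} (hf : Differentiable ℝ f) : Differentiable ℝ fun x => ‖f x‖ ^ 2 := by
  simp only [frobenius_norm_sq_eq_sum]
  fun_prop [differentiable_entry]

theorem differentiable_det [DecidableEq n] : Differentiable ℝ fun A : Matrix n n ℝ => A.det := by
  simp only [det_apply]
  fun_prop [differentiable_entry]

end FrobeniusCalculus

theorem det_eq_zero_of_br_eq_zero {ξ : M2} (h : br ξ = 0) : ξ.det = 0 := by
  rw [br, sub_eq_zero] at h
  rw [h, det_fin_two]
  simp [E11]

theorem sq_norm_br_add_sq_pos {y : ℝ} (hy : y ≠ 0) (ξ : M2) : 0 < ‖br ξ‖ ^ 2 + (ξ.det - y) ^ 2 := by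
  by_cases h : br ξ = 0
  · simp only [h, det_eq_zero_of_br_eq_zero h, norm_zero]
    positivity
  · have := norm_pos_iff.2 h
    positivity

theorem differentiable_br : Differentiable ℝ br :=
  differentiable_id.sub ((differentiable_entry 0 0).smul_const E11)

/-- W is Fréchet differentiable at every ξ ∈ ℝ^{2×2}. -/
theorem stmt_2 (y : ℝ) (hy : 0 < y) (ξ : M2) :
    DifferentiableAt ℝ (Wf y) ξ := by
  have hradicand : Differentiable ℝ fun η : M2 => ‖br η‖ ^ 2 + (η.det - y) ^ 2 :=
    differentiable_br.frobenius_norm_sq.fun_add ((differentiable_det.sub_const y).fun_pow 2)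
  exact (hradicand ξ).sqrt (sq_norm_br_add_sq_pos hy.ne' ξ).ne'
end

section
/- For every ξ₀ ∈ ℝ^{2×2}, the affine function a : ℝ^{2×2} × ℝ → ℝ defined by a(A, t) := ([A]·[ξ₀] + (t − y)(det ξ₀ − y))/W(ξ₀) satisfies a(A, det A) ≤ W(A) for all A ∈ ℝ^{2×2}, with equality a(ξ₀, det ξ₀) = W(ξ₀). -/
open Matrix Filter Topology

attribute [local instance] Matrix.frobeniusSeminormedAddCommGroup
  Matrix.frobeniusNormedAddCommGroup Matrix.frobeniusNormedSpace

/-!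
`W(ξ)` is the Euclidean length of the vector `([ξ], det ξ − y)`, and `a(A, det A)` is the inner
product of `([A], det A − y)` with `([ξ₀], det ξ₀ − y) / W(ξ₀)`, a vector of length at most one.
So the inequality is Cauchy–Schwarz, with equality when `A = ξ₀`.
-/

namespace Matrix

variable {m n : Type*} [Fintype m] [Fintype n]

theorem trace_transpose_mul_eq_sum {R : Type*} [NonUnitalNonAssocSemiring R]
    (A B : Matrix m n R) : (Aᵀ * B).trace = ∑ i, ∑ j, A i j * B i j := by
  simp only [trace, diag, mul_apply, transpose_apply]
  exact Finset.sum_comm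

theorem frobenius_norm_sq_eq_sum (A : Matrix m n ℝ) : ‖A‖ ^ 2 = ∑ i, ∑ j, A i j ^ 2 := by
  rw [frobenius_norm_def, ← Real.rpow_natCast, ← Real.rpow_mul (by positivity)]
  norm_num

theorem trace_transpose_mul_self_eq_frobenius_norm_sq (A : Matrix m n ℝ) :
    (Aᵀ * A).trace = ‖A‖ ^ 2 := by
  rw [trace_transpose_mul_eq_sum, frobenius_norm_sq_eq_sum]
  simp only [sq]

theorem trace_transpose_mul_le_frobenius_norm_mul (A B : Matrix m n ℝ) :
    (Aᵀ * B).trace ≤ ‖A‖ * ‖B‖ := by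
  have h : (Aᵀ * B).trace ^ 2 ≤ (‖A‖ * ‖B‖) ^ 2 := by
    simp only [trace_transpose_mul_eq_sum, mul_pow, frobenius_norm_sq_eq_sum,
      ← Fintype.sum_prod_type']
    exact Finset.sum_mul_sq_le_sq_mul_sq _ _ _
  exact (abs_le_of_sq_le_sq h (by positivity)).trans' (le_abs_self _)

end Matrix

theorem mul_add_mul_le_sqrt_mul_sqrt (p q u v : ℝ) :
    p * q + u * v ≤ √(p ^ 2 + u ^ 2) * √(q ^ 2 + v ^ 2) := by
  rw [← Real.sqrt_mul (by positivity)]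
  exact Real.le_sqrt_of_sq_le (by nlinarith [sq_nonneg (p * v - q * u)])

theorem trace_br_add_le_Wf_mul (y : ℝ) (A ξ : M2) :
    ((br A)ᵀ * br ξ).trace + (A.det - y) * (ξ.det - y) ≤ Wf y A * Wf y ξ :=
  calc ((br A)ᵀ * br ξ).trace + (A.det - y) * (ξ.det - y)
      ≤ ‖br A‖ * ‖br ξ‖ + (A.det - y) * (ξ.det - y) := by
        gcongr; exact Matrix.trace_transpose_mul_le_frobenius_norm_mul _ _
    _ ≤ Wf y A * Wf y ξ := mul_add_mul_le_sqrt_mul_sqrt _ _ _ _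

theorem trace_br_add_self_eq_Wf_sq (y : ℝ) (ξ : M2) :
    ((br ξ)ᵀ * br ξ).trace + (ξ.det - y) * (ξ.det - y) = Wf y ξ ^ 2 := by
  rw [Wf, Real.sq_sqrt (by positivity), Matrix.trace_transpose_mul_self_eq_frobenius_norm_sq]
  ring

theorem stmt_6_general (y : ℝ) (ξ₀ : M2)
    (a : M2 × ℝ → ℝ)
    (ha : ∀ p : M2 × ℝ,
      a p = (((br p.1)ᵀ * br ξ₀).trace + (p.2 - y) * (ξ₀.det - y)) / Wf y ξ₀) :
    (∀ A : M2, a (A, A.det) ≤ Wf y A) ∧ a (ξ₀, ξ₀.det) = Wf y ξ₀ := by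
  constructor
  · intro A
    rw [ha]
    exact div_le_of_le_mul₀ (Real.sqrt_nonneg _) (Real.sqrt_nonneg _)
      (trace_br_add_le_Wf_mul y A ξ₀)
  · rw [ha, trace_br_add_self_eq_Wf_sq, sq, mul_self_div_self]

/-- The affine map a(A, t) := ([A]·[ξ₀] + (t − y)(det ξ₀ − y)) / W(ξ₀) satisfies
a(A, det A) ≤ W(A) for all A, with equality at A = ξ₀. -/
theorem stmt_6 (y : ℝ) (hy : 0 < y) (ξ₀ : M2)
    (a : M2 × ℝ → ℝ)
    (ha : ∀ p : M2 × ℝ,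
      a p = (((br p.1)ᵀ * br ξ₀).trace + (p.2 - y) * (ξ₀.det - y)) / Wf y ξ₀) :
    (∀ A : M2, a (A, A.det) ≤ Wf y A) ∧ a (ξ₀, ξ₀.det) = Wf y ξ₀ :=
  stmt_6_general y ξ₀ a ha
end

section
/- Let A be a real 2×2 matrix with A₁₁ = 0, A₂₂ = 0 and A ≠ 0, and let t ∈ ℝ. For ν ≠ 0 set ξ_ν := A + ((t + A₁₂A₂₁)/ν) e₁⊗e₁ + ν e₂⊗e₂. Then det ξ_ν = t for every ν ≠ 0, and as ν → 0 the unit vectors ([ξ_ν], det ξ_ν − y)/W(ξ_ν) ∈ ℝ^{2×2} × ℝ converge to (A, t − y)/√(‖A‖² + (t − y)²). -/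
open Matrix Filter Topology

attribute [local instance] Matrix.frobeniusSeminormedAddCommGroup
  Matrix.frobeniusNormedAddCommGroup Matrix.frobeniusNormedSpace

/-! The `(1,1)` entry of `ξ_ν` blows up like `1/ν`, but `[·]` erases it while the determinant is
held at `t`; so `([ξ_ν], det ξ_ν − y) = (A + ν e₂⊗e₂, t − y)`, which tends to `(A, t − y) ≠ 0`,
and normalisation `v ↦ v / √(‖v.1‖² + v.2²)` is continuous away from the origin. -/

theorem det_add_smul_E11_add_smul_E22 (A : M2) (a b : ℝ) :
    (A + a • E11 + b • E22).det = (A 0 0 + a) * (A 1 1 + b) - A 0 1 * A 1 0 := by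
  simp [det_fin_two, E11, E22]

theorem br_add_smul_E11_add_smul_E22 {A : M2} (h11 : A 0 0 = 0) (a b : ℝ) :
    br (A + a • E11 + b • E22) = A + b • E22 := by
  have h00 : (A + a • E11 + b • E22) 0 0 = a := by simp [E11, E22, h11]
  rw [br, h00]
  abel

theorem continuousAt_inv_sqrt_smul_prod {E : Type*} [NormedAddCommGroup E] [NormedSpace ℝ E]
    {B : E} (hB : B ≠ 0) (s : ℝ) :
    ContinuousAt (fun X : E => (Real.sqrt (‖X‖ ^ 2 + s ^ 2))⁻¹ • ((X, s) : E × ℝ)) B := by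
  have hpos : Real.sqrt (‖B‖ ^ 2 + s ^ 2) ≠ 0 := by
    have := norm_pos_iff.mpr hB
    positivity
  have hsqrt : ContinuousAt (fun X : E => Real.sqrt (‖X‖ ^ 2 + s ^ 2)) B := by fun_prop
  exact (hsqrt.inv₀ hpos).smul (continuousAt_id.prodMk continuousAt_const)

theorem stmt_9_general (y : ℝ) (A : M2) (h11 : A 0 0 = 0) (h22 : A 1 1 = 0)
    (hA : A ≠ 0) (t : ℝ)
    (ξ : ℝ → M2) (hξ : ∀ ν : ℝ, ξ ν = A + ((t + A 0 1 * A 1 0) / ν) • E11 + ν • E22) :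
    (∀ ν : ℝ, ν ≠ 0 → (ξ ν).det = t) ∧
    Tendsto (fun ν : ℝ => (Wf y (ξ ν))⁻¹ • ((br (ξ ν), (ξ ν).det - y) : M2 × ℝ))
      (𝓝[≠] 0)
      (𝓝 ((Real.sqrt (‖A‖ ^ 2 + (t - y) ^ 2))⁻¹ • ((A, t - y) : M2 × ℝ))) := by
  have hdet : ∀ ν : ℝ, ν ≠ 0 → (ξ ν).det = t := by
    intro ν hν
    rw [hξ ν, det_add_smul_E11_add_smul_E22, h11, h22]
    field_simp
    ring
  refine ⟨hdet, ?_⟩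
  have hline : Tendsto (fun ν : ℝ => A + ν • E22) (𝓝 0) (𝓝 A) := by
    simpa using tendsto_const_nhds.add ((tendsto_id (x := 𝓝 (0 : ℝ))).smul_const E22)
  refine Tendsto.congr' ?_
    (((continuousAt_inv_sqrt_smul_prod hA (t - y)).tendsto.comp hline).mono_left
      nhdsWithin_le_nhds)
  filter_upwards [self_mem_nhdsWithin] with ν (hν : ν ≠ 0)
  rw [Function.comp_apply, Wf, hξ ν, br_add_smul_E11_add_smul_E22 h11, ← hξ ν, hdet ν hν]

/-- With A₁₁ = A₂₂ = 0, A ≠ 0, and ξ_ν := A + ((t + A₁₂A₂₁)/ν) e₁⊗e₁ + ν e₂⊗e₂ for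
ν ≠ 0: det ξ_ν = t, and ([ξ_ν], det ξ_ν − y)/W(ξ_ν) → (A, t − y)/√(‖A‖² + (t − y)²)
as ν → 0. -/
theorem stmt_9 (y : ℝ) (hy : 0 < y) (A : M2) (h11 : A 0 0 = 0) (h22 : A 1 1 = 0)
    (hA : A ≠ 0) (t : ℝ)
    (ξ : ℝ → M2) (hξ : ∀ ν : ℝ, ξ ν = A + ((t + A 0 1 * A 1 0) / ν) • E11 + ν • E22) :
    (∀ ν : ℝ, ν ≠ 0 → (ξ ν).det = t) ∧
    Tendsto (fun ν : ℝ => (Wf y (ξ ν))⁻¹ • ((br (ξ ν), (ξ ν).det - y) : M2 × ℝ))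
      (𝓝[≠] 0)
      (𝓝 ((Real.sqrt (‖A‖ ^ 2 + (t - y) ^ 2))⁻¹ • ((A, t - y) : M2 × ℝ))) :=
  stmt_9_general y A h11 h22 hA t ξ hξ
end

section
/- The convex hull of the set S := {(ξ, det ξ) : ξ ∈ ℝ^{2×2}} in ℝ^{2×2} × ℝ is the whole space ℝ^{2×2} × ℝ. -/
open Matrix Filter Topology

attribute [local instance] Matrix.frobeniusSeminormedAddCommGroup
  Matrix.frobeniusNormedAddCommGroup Matrix.frobeniusNormedSpace

/-! The determinant is a quadratic form on `ℝ^{2×2}`, so by the parallelogram law the point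
`(ξ, y)` is the midpoint of `(ξ ± η, det (ξ ± η))` as soon as `det η = y - det ξ`;
`η = diag (y - det ξ, 1)` will do. -/

theorem Matrix.det_fin_two_add_add_det_fin_two_sub {R : Type*} [CommRing R]
    (A B : Matrix (Fin 2) (Fin 2) R) : (A + B).det + (A - B).det = 2 * (A.det + B.det) := by
  simp only [Matrix.det_fin_two, Matrix.add_apply, Matrix.sub_apply]
  ring

theorem midpoint_graph_det_add_sub (ξ η : M2) :
    midpoint ℝ ((ξ + η, (ξ + η).det) : M2 × ℝ) (ξ - η, (ξ - η).det) = (ξ, ξ.det + η.det) := by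
  refine Prod.ext ?_ ?_
  · simp only [midpoint_eq_smul_add, invOf_eq_inv, Prod.fst_add, Prod.smul_fst]
    module
  · have hpar := Matrix.det_fin_two_add_add_det_fin_two_sub ξ η
    simp only [midpoint_eq_smul_add, invOf_eq_inv, Prod.snd_add, Prod.smul_snd, smul_eq_mul]
    linear_combination (2⁻¹ : ℝ) * hpar

theorem mem_convexHull_graph_det (ξ : M2) (y : ℝ) :
    (ξ, y) ∈ convexHull ℝ {p : M2 × ℝ | ∃ ξ : M2, p = (ξ, ξ.det)} := by
  set η : M2 := !![y - ξ.det, 0; 0, 1]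
  have hη : η.det = y - ξ.det := by simp [η, Matrix.det_fin_two_of]
  have hmid := midpoint_graph_det_add_sub ξ η
  rw [hη, add_sub_cancel] at hmid
  rw [← hmid]
  exact segment_subset_convexHull (s := {p : M2 × ℝ | ∃ ξ : M2, p = (ξ, ξ.det)})
    ⟨ξ + η, rfl⟩ ⟨ξ - η, rfl⟩ (midpoint_mem_segment _ _)

/-- The convex hull of S = {(ξ, det ξ) : ξ ∈ ℝ^{2×2}} is all of ℝ^{2×2} × ℝ. -/
theorem stmt_15 :
    convexHull ℝ {p : M2 × ℝ | ∃ ξ : M2, p = (ξ, ξ.det)} = Set.univ :=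
  Set.eq_univ_of_forall fun p => mem_convexHull_graph_det p.1 p.2
end

section
/- Define f : ℝ^{2×2} → ℝ by f(ξ) := √(‖ξ‖² + (det ξ)²). Then for every ξ ≠ 0, f is Fréchet differentiable at ξ and for all η ∈ ℝ^{2×2}: f(ξ + η) − f(ξ) − f′(ξ)(η) ≥ (det ξ / f(ξ))·det η. -/
open Matrix Filter Topology

attribute [local instance] Matrix.frobeniusSeminormedAddCommGroup
  Matrix.frobeniusNormedAddCommGroup Matrix.frobeniusNormedSpace

noncomputable section

/-!
Write `f ξ = ‖Φ ξ‖` with `Φ ξ = (ξ, det ξ)` in the Euclidean space `M2 × ℝ`. Since `det` is a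
quadratic form, `Φ (ξ + η) = Φ ξ + Φ'(ξ) η + (0, det η)`. By Cauchy–Schwarz the norm lies above
its tangent at `u = Φ ξ ≠ 0`: `‖v‖ - ‖u‖ ≥ ⟪u, v - u⟫ / ‖u‖`. Taking `v = Φ (ξ + η)`, the
first-order terms cancel against `f′(ξ) η` and what is left is `⟪Φ ξ, (0, det η)⟫ / f ξ =
det ξ · det η / f ξ`.
-/

open RealInnerProductSpace

section NormComp

variable {V E : Type*} [NormedAddCommGroup V] [NormedSpace ℝ V]
  [NormedAddCommGroup E] [InnerProductSpace ℝ E]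

theorem real_inner_div_norm_le_norm_sub_norm (u v : E) : ⟪u, v - u⟫ / ‖u‖ ≤ ‖v‖ - ‖u‖ := by
  rcases eq_or_ne u 0 with rfl | hu
  · simp
  rw [div_le_iff₀ (norm_pos_iff.mpr hu), inner_sub_right, real_inner_self_eq_norm_sq]
  nlinarith [real_inner_le_norm u v]

variable {Φ : V → E} {Φ' : V →L[ℝ] E} {x : V}

theorem HasFDerivAt.norm_s16 (hΦ : HasFDerivAt Φ Φ' x) (h0 : Φ x ≠ 0) :
    HasFDerivAt (fun y => ‖Φ y‖) (‖Φ x‖⁻¹ • (innerSL ℝ (Φ x)).comp Φ') x := by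
  have hsqrt := hΦ.norm_sq.sqrt (by positivity)
  simp only [Real.sqrt_sq (norm_nonneg _)] at hsqrt
  convert hsqrt using 1
  ext h
  simp only [_root_.smul_apply, ContinuousLinearMap.comp_apply, coe_innerSL_apply, smul_eq_mul,
    nsmul_eq_mul, Nat.cast_ofNat]
  field_simp

theorem HasFDerivAt.norm_sub_norm_sub_fderiv_ge (hΦ : HasFDerivAt Φ Φ' x) (h0 : Φ x ≠ 0) {h : V}
    {r : E} (hr : Φ (x + h) - Φ x - Φ' h = r) :
    ‖Φ (x + h)‖ - ‖Φ x‖ - fderiv ℝ (fun y => ‖Φ y‖) x h ≥ ⟪Φ x, r⟫ / ‖Φ x‖ := by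
  have := real_inner_div_norm_le_norm_sub_norm (Φ x) (Φ (x + h))
  rw [(hΦ.norm_s16 h0).fderiv, ← hr, inner_sub_right, sub_div]
  simp only [_root_.smul_apply, ContinuousLinearMap.comp_apply, innerSL_apply_apply, smul_eq_mul,
    inv_mul_eq_div]
  linarith

end NormComp

section QuadraticMap

variable {V G : Type*} [NormedAddCommGroup V] [NormedSpace ℝ V]
  [NormedAddCommGroup G] [NormedSpace ℝ G] (B : V →L[ℝ] V →L[ℝ] G) (x h : V)

theorem ContinuousLinearMap.hasFDerivAt_apply_self :
    HasFDerivAt (fun y => B y y) (B x + B.flip x) x := by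
  refine (B.hasFDerivAt_of_bilinear (hasFDerivAt_id x) (hasFDerivAt_id x)).congr_fderiv ?_
  ext v
  simp

theorem ContinuousLinearMap.apply_self_add :
    B (x + h) (x + h) = B x x + (B x + B.flip x) h + B h h := by
  simp only [map_add, _root_.add_apply, ContinuousLinearMap.flip_apply]
  abel

end QuadraticMap

noncomputable section

abbrev M2Euclidean := PiLp 2 fun _ : Fin 2 => EuclideanSpace ℝ (Fin 2)

/-- The Frobenius norm on `M2` is by definition the norm of `M2Euclidean`, whose inner product
this transports. -/
def toM2Euclidean : M2 →ₗᵢ[ℝ] M2Euclidean where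
  toFun ξ := WithLp.toLp 2 fun i => WithLp.toLp 2 (ξ i)
  map_add' _ _ := rfl
  map_smul' _ _ := rfl
  norm_map' _ := rfl

def entryCLM (i j : Fin 2) : M2 →L[ℝ] ℝ :=
  LinearMap.toContinuousLinearMap (Matrix.entryLinearMap ℝ ℝ i j)

/-- The type is left to be inferred: written out, `M2 →L[ℝ] M2 →L[ℝ] ℝ` would elaborate with the
product topology of `Matrix` instead of the Frobenius one, which is defeq but not reducibly so. -/
def detForm :=
  (ContinuousLinearMap.mul ℝ ℝ).bilinearComp (entryCLM 0 0) (entryCLM 1 1) -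
    (ContinuousLinearMap.mul ℝ ℝ).bilinearComp (entryCLM 0 1) (entryCLM 1 0)

theorem detForm_self (ξ : M2) : detForm ξ ξ = ξ.det := by
  rw [Matrix.det_fin_two]
  rfl

def graphDet (ξ : M2) : WithLp 2 (M2Euclidean × ℝ) := WithLp.toLp 2 (toM2Euclidean ξ, ξ.det)

theorem norm_graphDet (ξ : M2) : ‖graphDet ξ‖ = √(‖ξ‖ ^ 2 + ξ.det ^ 2) := by
  rw [WithLp.prod_norm_eq_of_L2]
  simp [graphDet]

theorem inner_graphDet_toLp_zero (ξ : M2) (t : ℝ) :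
    ⟪graphDet ξ, WithLp.toLp 2 (0, t)⟫ = ξ.det * t := by
  simp [graphDet, WithLp.prod_inner_apply, mul_comm]

theorem exists_hasFDerivAt_graphDet (ξ : M2) : ∃ Φ', HasFDerivAt (𝕜 := ℝ) graphDet Φ' ξ ∧
    ∀ η, graphDet (ξ + η) - graphDet ξ - Φ' η = WithLp.toLp 2 (0, η.det) := by
  have hdet := (detForm.hasFDerivAt_apply_self ξ).congr_of_eventuallyEq (f₁ := fun y : M2 => y.det)
    (Eventually.of_forall fun y => (detForm_self y).symm)
  refine ⟨_, (WithLp.prodContinuousLinearEquiv 2 ℝ M2Euclidean ℝ).symm.hasFDerivAt.comp ξ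
    (toM2Euclidean.toContinuousLinearMap.hasFDerivAt.prodMk hdet), fun η => ?_⟩
  rw [graphDet, graphDet, ← detForm_self (ξ + η), ← detForm_self ξ, ← detForm_self η,
    detForm.apply_self_add]
  change _ - _ - WithLp.toLp 2 (toM2Euclidean η, (detForm ξ + detForm.flip ξ) η) = _
  simp only [← WithLp.toLp_sub, Prod.mk_sub_mk, map_add, _root_.add_apply,
    ContinuousLinearMap.flip_apply]
  congr 1
  rw [Prod.mk.injEq]
  constructor <;> abel

end

/-- For f(ξ) := √(‖ξ‖² + (det ξ)²) and ξ ≠ 0: f is differentiable at ξ and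
f(ξ + η) − f(ξ) − f′(ξ)(η) ≥ (det ξ / f(ξ)) · det η for all η. -/
theorem stmt_16 (f : M2 → ℝ) (hf : ∀ ξ : M2, f ξ = Real.sqrt (‖ξ‖ ^ 2 + ξ.det ^ 2))
    (ξ : M2) (hξ : ξ ≠ 0) :
    DifferentiableAt ℝ f ξ ∧
    ∀ η : M2, f (ξ + η) - f ξ - fderiv ℝ f ξ η ≥ (ξ.det / f ξ) * η.det := by
  obtain rfl : f = fun ξ => ‖graphDet ξ‖ := funext fun ξ => by rw [hf, norm_graphDet]
  obtain ⟨Φ', hΦ, hremainder⟩ := exists_hasFDerivAt_graphDet ξ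
  have h0 : graphDet ξ ≠ 0 := by
    rw [← norm_ne_zero_iff, norm_graphDet, Real.sqrt_ne_zero']
    have := norm_pos_iff.mpr hξ
    positivity
  refine ⟨(hΦ.norm_s16 h0).differentiableAt, fun η => ?_⟩
  have := hΦ.norm_sub_norm_sub_fderiv_ge h0 (hremainder η)
  rwa [inner_graphDet_toLp_zero, mul_div_right_comm] at this
end
end
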